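/- arXiv:1902.06152 — 11 statements merged into one kernel-verified Lean document; each statement's English description precedes it below -/
import Mathlib

section
/- If a and b are distinct points of a compact Hausdorff space X that are pin equivalent, then there exists a symmetric closed binary relation R on X with domain X such that for all x ∈ X: a R x ↔ x = b, and b R x ↔ x = a. (Representation theorem for pin equivalence.) -/
/-!
Pull everything back to `Y`, where `A = f⁻¹{a}` and `B = f⁻¹{b} = g(A)` are disjoint closed
sets. Take an open `U ⊇ A` whose closure `C` misses both `B` and `g⁻¹(A)`.
Relate `y` to `g y` (and back) for `y ∈ C`, and relate every point outside `U ∪ g(U)` to itself.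
This is a closed symmetric relation with full domain in which the points of `A` are related only
to points of `B` and vice versa. Its image under `f × f` is closed by compactness of `Y`, and
inherits all the other properties because `f` is surjective.
-/

universe u

/-- Points `a`, `b` of a compact Hausdorff space `X` are pin equivalent if there exist a
compact Hausdorff space `Y`, a continuous surjection `f : Y → X`, and a homeomorphism
`g : Y → Y` with `g (f ⁻¹' {a}) = f ⁻¹' {b}`. -/
def PinEquiv {X : Type u} [TopologicalSpace X] (a b : X) : Prop :=
  ∃ (Y : Type u) (_ : TopologicalSpace Y) (_ : CompactSpace Y) (_ : T2Space Y)
    (f : Y → X) (g : Y ≃ₜ Y),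
    Continuous f ∧ Function.Surjective f ∧ (g : Y → Y) '' (f ⁻¹' {a}) = f ⁻¹' {b}

open Set Function

def pinRel {Y : Type*} (g : Y → Y) (C E : Set Y) : Set (Y × Y) :=
  {p | p.1 ∈ C ∧ p.2 = g p.1} ∪ {p | p.2 ∈ C ∧ p.1 = g p.2} ∪ {p | p.1 ∈ E ∧ p.2 = p.1}

section PinRel

variable {Y : Type*} {g : Y → Y} {C E A B : Set Y}

theorem isClosed_pinRel [TopologicalSpace Y] [T2Space Y] (hg : Continuous g) (hC : IsClosed C)
    (hE : IsClosed E) : IsClosed (pinRel g C E) :=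
  (((hC.preimage continuous_fst).inter (isClosed_eq continuous_snd (hg.comp continuous_fst))).union
    ((hC.preimage continuous_snd).inter (isClosed_eq continuous_fst (hg.comp continuous_snd)))).union
    ((hE.preimage continuous_fst).inter (isClosed_eq continuous_snd continuous_fst))

theorem swap_mem_pinRel {p : Y × Y} (hp : p ∈ pinRel g C E) : p.swap ∈ pinRel g C E := by
  obtain ⟨y, z⟩ := p
  simp only [pinRel, mem_union, mem_ofPred_eq, Prod.swap_prod_mk] at hp ⊢
  rcases hp with (h | h) | ⟨hy, rfl⟩
  · exact Or.inl (Or.inr h)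
  · exact Or.inl (Or.inl h)
  · exact Or.inr ⟨hy, rfl⟩

theorem exists_mem_pinRel (hcover : ∀ y, y ∈ C ∨ y ∈ g '' C ∨ y ∈ E) (y : Y) :
    ∃ z, (y, z) ∈ pinRel g C E := by
  rcases hcover y with hy | ⟨z, hz, rfl⟩ | hy
  · exact ⟨g y, Or.inl (Or.inl ⟨hy, rfl⟩)⟩
  · exact ⟨z, Or.inl (Or.inr ⟨hz, rfl⟩)⟩
  · exact ⟨y, Or.inr ⟨hy, rfl⟩⟩

theorem snd_mem_of_mem_pinRel (hg : ∀ y ∈ A, g y ∈ B) (hC : ∀ y ∈ C, g y ∉ A)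
    (hE : Disjoint E A) {p : Y × Y} (hp : p ∈ pinRel g C E) (h₁ : p.1 ∈ A) : p.2 ∈ B := by
  obtain ⟨y, z⟩ := p
  simp only [pinRel, mem_union, mem_ofPred_eq] at hp h₁ ⊢
  rcases hp with (⟨-, rfl⟩ | ⟨hz, rfl⟩) | ⟨hy, -⟩
  · exact hg y h₁
  · exact absurd h₁ (hC z hz)
  · exact absurd h₁ (disjoint_left.mp hE hy)

theorem snd_mem_of_mem_pinRel' (hg : ∀ y, g y ∈ B → y ∈ A) (hC : Disjoint C B)
    (hE : Disjoint E B) {p : Y × Y} (hp : p ∈ pinRel g C E) (h₁ : p.1 ∈ B) : p.2 ∈ A := by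
  obtain ⟨y, z⟩ := p
  simp only [pinRel, mem_union, mem_ofPred_eq] at hp h₁ ⊢
  rcases hp with (⟨hy, -⟩ | ⟨-, rfl⟩) | ⟨hy, -⟩
  · exact absurd h₁ (disjoint_left.mp hC hy)
  · exact hg z h₁
  · exact absurd h₁ (disjoint_left.mp hE hy)

end PinRel

theorem exists_isClosed_symm_rel_exchanging {Y : Type*} [TopologicalSpace Y] [NormalSpace Y]
    [T2Space Y] (g : Y ≃ₜ Y) {A B : Set Y} (hA : IsClosed A) (hAB : Disjoint A B)
    (hg : g '' A = B) :
    ∃ T : Set (Y × Y), IsClosed T ∧ (∀ p ∈ T, p.swap ∈ T) ∧ (∀ y, ∃ z, (y, z) ∈ T) ∧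
      ∀ p ∈ T, (p.1 ∈ A → p.2 ∈ B) ∧ (p.1 ∈ B → p.2 ∈ A) := by
  have hgB : ∀ y, g y ∈ B ↔ y ∈ A := fun y => by rw [← hg, g.injective.mem_set_image]
  have hB : IsClosed B := hg ▸ g.isClosedMap A hA
  have hAgA : Disjoint A (g ⁻¹' A) :=
    disjoint_left.mpr fun y hy hgy => disjoint_left.mp hAB hgy ((hgB y).2 hy)
  obtain ⟨U, hUo, hAU, hUC⟩ := normal_exists_closure_subset hA
    (hB.union (hA.preimage g.continuous)).isOpen_compl
    (subset_compl_iff_disjoint_right.mpr (hAB.union_right hAgA))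
  set C := closure U
  set E := (U ∪ g '' U)ᶜ
  have hCB : Disjoint C B := disjoint_left.mpr fun y hy hyB => hUC hy (Or.inl hyB)
  have hCgA : ∀ y ∈ C, g y ∉ A := fun y hy hgy => hUC hy (Or.inr hgy)
  have hEA : Disjoint E A := disjoint_compl_left_iff_subset.mpr (hAU.trans subset_union_left)
  have hEB : Disjoint E B :=
    disjoint_compl_left_iff_subset.mpr (hg ▸ (image_mono hAU).trans subset_union_right)
  have hcover : ∀ y, y ∈ C ∨ y ∈ g '' C ∨ y ∈ E := fun y => by
    by_cases hy : y ∈ U ∪ g '' U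
    · rcases hy with hy | hy
      · exact Or.inl (subset_closure hy)
      · exact Or.inr (Or.inl (image_mono subset_closure hy))
    · exact Or.inr (Or.inr hy)
  refine ⟨pinRel g C E,
    isClosed_pinRel g.continuous isClosed_closure (hUo.union (g.isOpenMap U hUo)).isClosed_compl,
    fun p => swap_mem_pinRel, exists_mem_pinRel hcover, fun p hp => ⟨?_, ?_⟩⟩
  · exact snd_mem_of_mem_pinRel (fun y => (hgB y).2) hCgA hEA hp
  · exact snd_mem_of_mem_pinRel' (fun y => (hgB y).1) hCB hEB hp

section Pushforward

variable {X Y : Type*} {f : Y → X} {T : Set (Y × Y)}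

theorem swap_mem_image_prodMap (hT : ∀ p ∈ T, p.swap ∈ T) :
    ∀ q ∈ Prod.map f f '' T, q.swap ∈ Prod.map f f '' T := by
  rintro _ ⟨p, hp, rfl⟩
  exact ⟨p.swap, hT p hp, rfl⟩

theorem exists_mem_image_prodMap (hf : Surjective f) (hT : ∀ y, ∃ z, (y, z) ∈ T) (x : X) :
    ∃ x', (x, x') ∈ Prod.map f f '' T := by
  obtain ⟨y, rfl⟩ := hf x
  obtain ⟨z, hz⟩ := hT y
  exact ⟨f z, (y, z), hz, rfl⟩

theorem mk_mem_image_prodMap_iff (hf : Surjective f) (hT : ∀ y, ∃ z, (y, z) ∈ T) {a b : X}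
    (hab : ∀ p ∈ T, f p.1 = a → f p.2 = b) (x : X) : (a, x) ∈ Prod.map f f '' T ↔ x = b := by
  constructor
  · rintro ⟨p, hp, hpx⟩
    obtain ⟨hpa, rfl⟩ := Prod.ext_iff.mp hpx
    exact hab p hp hpa
  · rintro rfl
    obtain ⟨y, rfl⟩ := hf a
    obtain ⟨z, hz⟩ := hT y
    exact ⟨(y, z), hz, by simp only [Prod.map, hab _ hz rfl]⟩

end Pushforward

/-- Representation theorem: if distinct points `a ≠ b` of a compact Hausdorff space are
pin equivalent, then there is a symmetric closed relation `R` on `X` with full domain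
such that `a R x ↔ x = b` and `b R x ↔ x = a`. -/
theorem pinEquiv_represent {X : Type u} [TopologicalSpace X] [CompactSpace X] [T2Space X]
    {a b : X} (hab : a ≠ b) (h : PinEquiv a b) :
    ∃ R : Set (X × X), IsClosed R ∧ (∀ p ∈ R, Prod.swap p ∈ R) ∧
      (∀ x : X, ∃ y : X, (x, y) ∈ R) ∧
      (∀ x : X, (a, x) ∈ R ↔ x = b) ∧ (∀ x : X, (b, x) ∈ R ↔ x = a) := by
  obtain ⟨Y, _, _, _, f, g, hf, hfs, hg⟩ := h
  obtain ⟨T, hTc, hTs, hTd, hTab⟩ := exists_isClosed_symm_rel_exchanging g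
    (isClosed_singleton.preimage hf) ((disjoint_singleton.mpr hab).preimage f) hg
  exact ⟨Prod.map f f '' T, (hTc.isCompact.image (hf.prodMap hf)).isClosed,
    swap_mem_image_prodMap hTs, exists_mem_image_prodMap hfs hTd,
    mk_mem_image_prodMap_iff hfs hTd fun p hp => (hTab p hp).1,
    mk_mem_image_prodMap_iff hfs hTd fun p hp => (hTab p hp).2⟩
end

section
/- Suppose R is a closed relation on a compact Hausdorff space X such that a R x ↔ x = b for all x. If V is a neighborhood of b, then a has a neighborhood U such that R(U) ⊆ V, where R(U) = {y : ∃ x ∈ U, x R y}. -/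
/-! The points whose `R`-image leaves an open set `W` form the projection of the closed set
`R ∩ (X × Wᶜ)`; projecting along a compact factor is a closed map, so the points whose image
stays inside `W` form an open set. Apply this to `W = interior V`. -/

theorem IsClosed.isOpen_setOf_forall_mem_of_compactSpace {X Y : Type*} [TopologicalSpace X]
    [TopologicalSpace Y] [CompactSpace Y] {R : Set (X × Y)} (hR : IsClosed R) {W : Set Y}
    (hW : IsOpen W) : IsOpen {x | ∀ y, (x, y) ∈ R → y ∈ W} := by
  have hexit : IsClosed (Prod.fst '' (R ∩ Prod.snd ⁻¹' Wᶜ)) :=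
    isClosedMap_fst_of_compactSpace _ (hR.inter (hW.isClosed_compl.preimage continuous_snd))
  convert hexit.isOpen_compl using 1
  ext x
  simp

theorem relation_image_small_general {X : Type*} [TopologicalSpace X] [CompactSpace X]
    {a b : X} {R : Set (X × X)} (hclosed : IsClosed R)
    (ha : ∀ x : X, (a, x) ∈ R ↔ x = b)
    {V : Set X} (hV : b ∈ interior V) :
    ∃ U : Set X, a ∈ interior U ∧ {y : X | ∃ x ∈ U, (x, y) ∈ R} ⊆ V := by
  refine ⟨{x | ∀ y, (x, y) ∈ R → y ∈ interior V}, ?_, ?_⟩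
  · rw [(hclosed.isOpen_setOf_forall_mem_of_compactSpace isOpen_interior).interior_eq]
    intro y hy
    rwa [(ha y).mp hy]
  · rintro y ⟨x, hx, hxy⟩
    exact interior_subset (hx y hxy)

/-- If `R` is a closed relation on a compact Hausdorff space with `a R x ↔ x = b`, and `V`
is a neighborhood of `b`, then `a` has a neighborhood `U` with `R(U) ⊆ V`. -/
theorem relation_image_small {X : Type*} [TopologicalSpace X] [CompactSpace X] [T2Space X]
    {a b : X} {R : Set (X × X)} (hclosed : IsClosed R)
    (ha : ∀ x : X, (a, x) ∈ R ↔ x = b)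
    {V : Set X} (hV : b ∈ interior V) :
    ∃ U : Set X, a ∈ interior U ∧ {y : X | ∃ x ∈ U, (x, y) ∈ R} ⊆ V :=
  relation_image_small_general hclosed ha hV
end

section
/- Suppose R is a closed relation on a compact Hausdorff space X with (a R x ↔ x = b) for all x, and (x_i) is a net converging to a with x_i R y_i for all i. Then the net (y_i) converges to b. -/
/-!
In a compact space a net converges to `b` as soon as `b` is its only cluster point. If `c` is a
cluster point of `(y_i)`, then `(a, c)` is a cluster point of `(x_i, y_i)`, hence lies in the
closed set `R`, which forces `c = b`.
-/

open Filter Topology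

section

variable {α X Y : Type*} [TopologicalSpace X] [TopologicalSpace Y]

theorem Filter.Tendsto.mapClusterPt_prodMk {l : Filter α} {x : α → X} {y : α → Y} {a : X} {c : Y}
    (hx : Tendsto x l (𝓝 a)) (hy : MapClusterPt c l y) :
    MapClusterPt (a, c) l fun i ↦ (x i, y i) := by
  rw [((𝓝 a).basis_sets.prod_nhds (𝓝 c).basis_sets).mapClusterPt_iff_frequently]
  rintro ⟨s, t⟩ ⟨hs, ht⟩
  exact ((mapClusterPt_iff_frequently.1 hy t ht).and_eventually (hx hs)).mono
    fun _ hi ↦ ⟨hi.2, hi.1⟩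

theorem Filter.Tendsto.tendsto_of_isClosed_rel [CompactSpace Y] {l : Filter α}
    {R : Set (X × Y)} {x : α → X} {y : α → Y} {a : X} {b : Y} (hx : Tendsto x l (𝓝 a))
    (hclosed : IsClosed R) (hab : ∀ c, (a, c) ∈ R → c = b) (hR : ∀ᶠ i in l, (x i, y i) ∈ R) :
    Tendsto y l (𝓝 b) :=
  tendsto_nhds_of_unique_mapClusterPt fun _ hc ↦
    hab _ <| hclosed.mem_of_mapClusterPt (hx.mapClusterPt_prodMk hc) hR

end

theorem relation_net_tendsto_general {X : Type*} [TopologicalSpace X] [CompactSpace X]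
    {a b : X} {R : Set (X × X)} (hclosed : IsClosed R)
    (ha : ∀ x : X, (a, x) ∈ R ↔ x = b)
    {I : Type*} [Preorder I]
    {x y : I → X} (hR : ∀ i, (x i, y i) ∈ R)
    (hx : Filter.Tendsto x Filter.atTop (nhds a)) :
    Filter.Tendsto y Filter.atTop (nhds b) :=
  hx.tendsto_of_isClosed_rel hclosed (fun c ↦ (ha c).1) (.of_forall hR)

/-- If `R` is a closed relation on a compact Hausdorff space with `a R x ↔ x = b`, and a
net `(x_i)` converges to `a` with `x_i R y_i` for all `i`, then `(y_i)` converges to `b`. -/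
theorem relation_net_tendsto {X : Type*} [TopologicalSpace X] [CompactSpace X] [T2Space X]
    {a b : X} {R : Set (X × X)} (hclosed : IsClosed R)
    (ha : ∀ x : X, (a, x) ∈ R ↔ x = b)
    {I : Type*} [Preorder I] [Nonempty I] (hdir : IsDirected I (· ≤ ·))
    {x y : I → X} (hR : ∀ i, (x i, y i) ∈ R)
    (hx : Filter.Tendsto x Filter.atTop (nhds a)) :
    Filter.Tendsto y Filter.atTop (nhds b) :=
  relation_net_tendsto_general hclosed ha hR hx
end

section
/- Pin equivalence of points in a compact Hausdorff space is transitive: if a ≡ₚ b and b ≡ₚ c then a ≡ₚ c. -/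
/-!
A pin witness `(f, g)` for `a, b` gives the closed relation `{(f p, f (g p))}` on `X`: it has full
domain and range, relates `a` to `b` only, and relates only `a` to `b`. Such relations compose,
the composite staying closed because `X` is compact. Conversely, such a relation `R` from `a` to
`c` yields a pin witness: the compact space of bi-infinite `R`-chains, mapped to `X` by the
coordinate at `0`, together with the shift.
-/

universe u

open Set SetRel

lemma IsClosed.relComp {α β γ : Type*} [TopologicalSpace α] [TopologicalSpace β]
    [TopologicalSpace γ] [CompactSpace β] {R : SetRel α β} {S : SetRel β γ}
    (hR : IsClosed R) (hS : IsClosed S) : IsClosed (R ○ S) := by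
  have h : R ○ S = Prod.snd '' {q : β × (α × γ) | (q.2.1, q.1) ∈ R ∧ (q.1, q.2.2) ∈ S} := by
    ext ⟨x, z⟩
    simp [and_comm]
  rw [h]
  exact isClosedMap_snd_of_compactSpace _ <|
    (hR.preimage (by fun_prop)).inter (hS.preimage (by fun_prop))

def SetRel.chains {α : Type*} (R : SetRel α α) : Set (ℤ → α) :=
  {u | ∀ n, u n ~[R] u (n + 1)}

namespace SetRel

variable {α : Type*} {R : SetRel α α}

lemma isClosed_chains [TopologicalSpace α] (hR : IsClosed R) : IsClosed R.chains := by
  simp only [chains, ofPred_forall]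
  exact isClosed_iInter fun n => hR.preimage (by fun_prop)

lemma exists_mem_chains_apply_zero_eq (hdom : R.dom = univ) (hcod : R.cod = univ) (x : α) :
    ∃ u ∈ R.chains, u 0 = x := by
  choose next hnext using fun y => eq_univ_iff_forall.mp hdom y
  choose prev hprev using fun y => eq_univ_iff_forall.mp hcod y
  refine ⟨fun | .ofNat n => next^[n] x | .negSucc n => prev^[n + 1] x, ?_, rfl⟩
  rintro (n | _ | n)
  · show (next^[n] x, next^[n + 1] x) ∈ R
    rw [Function.iterate_succ_apply']
    exact hnext _
  · exact hprev x
  · show (prev^[n + 2] x, prev^[n + 1] x) ∈ R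
    rw [Function.iterate_succ_apply']
    exact hprev _

variable [TopologicalSpace α]

def chainsShift (R : SetRel α α) : R.chains ≃ₜ R.chains :=
  (Homeomorph.piCongrLeft (Y := fun _ => α) (Equiv.addRight 1)).symm.subtype fun u =>
    ⟨fun hu n => hu (n + 1), fun hu n => by simpa using hu (n - 1)⟩

end SetRel

lemma Homeomorph.image_preimage_singleton_eq_iff {X Y : Type*} [TopologicalSpace Y]
    (f : Y → X) (g : Y ≃ₜ Y) (a b : X) :
    g '' (f ⁻¹' {a}) = f ⁻¹' {b} ↔ ∀ p, f p = a ↔ f (g p) = b := by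
  rw [← g.coe_toEquiv, ← Equiv.eq_preimage_iff_image_eq, Set.ext_iff]
  rfl

/-- A directed form of the closed relations of the representation theorem; unlike symmetric
ones, these compose. -/
structure IsPinRel {X : Type*} [TopologicalSpace X] (R : SetRel X X) (a b : X) : Prop where
  isClosed : IsClosed R
  dom_eq : R.dom = univ
  cod_eq : R.cod = univ
  rel_left_iff : ∀ y, a ~[R] y ↔ y = b
  rel_right_iff : ∀ x, x ~[R] b ↔ x = a

namespace IsPinRel

variable {X : Type*} [TopologicalSpace X] {R S : SetRel X X} {a b c : X}

lemma comp [CompactSpace X] (hR : IsPinRel R a b) (hS : IsPinRel S b c) :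
    IsPinRel (R ○ S) a c where
  isClosed := hR.isClosed.relComp hS.isClosed
  dom_eq := eq_univ_of_forall fun x => by
    obtain ⟨y, hxy⟩ := eq_univ_iff_forall.mp hR.dom_eq x
    obtain ⟨z, hyz⟩ := eq_univ_iff_forall.mp hS.dom_eq y
    exact ⟨z, y, hxy, hyz⟩
  cod_eq := eq_univ_of_forall fun z => by
    obtain ⟨y, hyz⟩ := eq_univ_iff_forall.mp hS.cod_eq z
    obtain ⟨x, hxy⟩ := eq_univ_iff_forall.mp hR.cod_eq y
    exact ⟨x, y, hxy, hyz⟩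
  rel_left_iff z := by
    refine ⟨fun ⟨y, hay, hyz⟩ => ?_, fun hz => ?_⟩
    · rw [hR.rel_left_iff] at hay
      exact (hS.rel_left_iff z).1 (hay ▸ hyz)
    · exact ⟨b, (hR.rel_left_iff b).2 rfl, hz ▸ (hS.rel_left_iff c).2 rfl⟩
  rel_right_iff x := by
    refine ⟨fun ⟨y, hxy, hyc⟩ => ?_, fun hx => ?_⟩
    · rw [hS.rel_right_iff] at hyc
      exact (hR.rel_right_iff x).1 (hyc ▸ hxy)
    · exact ⟨b, hx ▸ (hR.rel_right_iff a).2 rfl, (hS.rel_right_iff b).2 rfl⟩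

lemma pinEquiv [CompactSpace X] [T2Space X] (hR : IsPinRel R a b) : PinEquiv a b := by
  have : CompactSpace R.chains :=
    isCompact_iff_compactSpace.mp (isClosed_chains hR.isClosed).isCompact
  refine ⟨R.chains, inferInstance, inferInstance, inferInstance, fun u => u.1 0, chainsShift R,
    (continuous_apply 0).comp continuous_subtype_val, fun x => ?_, ?_⟩
  · obtain ⟨u, hu, hu0⟩ := exists_mem_chains_apply_zero_eq hR.dom_eq hR.cod_eq x
    exact ⟨⟨u, hu⟩, hu0⟩
  · rw [Homeomorph.image_preimage_singleton_eq_iff]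
    intro u
    have h01 : u.1 0 ~[R] (chainsShift R u).1 0 := u.2 0
    exact ⟨fun h => (hR.rel_left_iff _).1 (h ▸ h01), fun h => (hR.rel_right_iff _).1 (h ▸ h01)⟩

end IsPinRel

lemma PinEquiv.exists_isPinRel {X : Type u} [TopologicalSpace X] [T2Space X] {a b : X}
    (h : PinEquiv a b) : ∃ R : SetRel X X, IsPinRel R a b := by
  obtain ⟨Y, _, _, _, f, g, hf, hfs, hg⟩ := h
  rw [Homeomorph.image_preimage_singleton_eq_iff] at hg
  refine ⟨range fun p => (f p, f (g p)),
    ⟨(isCompact_range (by fun_prop)).isClosed, ?_, ?_, ?_, ?_⟩⟩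
  · refine eq_univ_of_forall fun x => ?_
    obtain ⟨p, rfl⟩ := hfs x
    exact ⟨_, p, rfl⟩
  · refine eq_univ_of_forall fun y => ?_
    obtain ⟨q, rfl⟩ := hfs y
    exact ⟨f (g.symm q), g.symm q, by simp⟩
  · refine fun y => ⟨fun ⟨p, hp⟩ => ?_, fun hy => ?_⟩
    · obtain ⟨hpa, rfl⟩ := Prod.mk.inj hp
      exact (hg p).1 hpa
    · obtain ⟨p, hp⟩ := hfs a
      exact ⟨p, Prod.ext hp (hy ▸ (hg p).1 hp)⟩
  · refine fun x => ⟨fun ⟨p, hp⟩ => ?_, fun hx => ?_⟩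
    · obtain ⟨rfl, hpb⟩ := Prod.mk.inj hp
      exact (hg p).2 hpb
    · obtain ⟨q, hq⟩ := hfs b
      have hq' : f (g (g.symm q)) = b := by rwa [g.apply_symm_apply]
      exact ⟨g.symm q, Prod.ext (hx ▸ (hg _).2 hq') hq'⟩

/-- Pin equivalence is transitive. -/
theorem pinEquiv_trans {X : Type u} [TopologicalSpace X] [CompactSpace X] [T2Space X]
    {a b c : X} (hab : PinEquiv a b) (hbc : PinEquiv b c) : PinEquiv a c := by
  obtain ⟨R, hR⟩ := hab.exists_isPinRel
  obtain ⟨S, hS⟩ := hbc.exists_isPinRel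
  exact (hR.comp hS).pinEquiv
end

section
/- Let a ≠ b in a compact Hausdorff space X. There exists a symmetric closed relation R on X with domain X satisfying (a R x ↔ x = b) and (b R x ↔ x = a) if and only if there exists a closed relation S ⊆ X × X such that dom(S) is a neighborhood of a, ran(S) is a neighborhood of b disjoint from dom(S), (x S b ↔ x = a) for all x, and (a S y ↔ y = b) for all y. -/
/-!
(⇒) Cut `R` down to `S = R ∩ U ×ˢ V` for disjoint closed neighbourhoods `U ∋ a`, `V ∋ b`.
Since `X` is compact and `R` is closed, `x ↦ R x` is upper semicontinuous, so the points `x` near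
`a` have all their `R`-partners near `b`, in particular one in `V`: the domain of `S` is a
neighbourhood of `a`, and by symmetry of `R` its range is a neighbourhood of `b`.

(⇐) Symmetrize `S` and relate every point outside `interior (dom S) ∪ interior (ran S)` to every
other such point. The result is closed, symmetric and total, and does not change the relatives
of `a` and `b`, which lie inside that open set.
-/

open Set Filter Topology

namespace SetRel

variable {X Y : Type*}

section Topology

variable [TopologicalSpace X] [TopologicalSpace Y]

lemma isOpen_setOf_forall_mem_of_isClosed [CompactSpace Y] {R : SetRel X Y} (hR : IsClosed R)
    {V : Set Y} (hV : IsOpen V) : IsOpen {x | ∀ y, (x, y) ∈ R → y ∈ V} := by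
  have hcompl : {x | ∀ y, (x, y) ∈ R → y ∈ V} = (Prod.fst '' (R ∩ univ ×ˢ Vᶜ))ᶜ := by
    ext x
    simp
  rw [hcompl]
  exact (isClosedMap_fst_of_compactSpace _ (hR.inter (isClosed_univ.prod hV.isClosed_compl)))
    |>.isOpen_compl

lemma dom_inter_prod_mem_nhds [CompactSpace Y] {R : SetRel X Y} (hR : IsClosed R)
    (hdom : ∀ x, ∃ y, (x, y) ∈ R) {a : X} {U : Set X} {V : Set Y} (hU : U ∈ 𝓝 a)
    (hV : ∀ y, (a, y) ∈ R → y ∈ interior V) : (R ∩ U ×ˢ V).dom ∈ 𝓝 a := by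
  have hnear : {x | ∀ y, (x, y) ∈ R → y ∈ interior V} ∈ 𝓝 a :=
    (isOpen_setOf_forall_mem_of_isClosed hR isOpen_interior).mem_nhds hV
  filter_upwards [hU, hnear] with x hxU hxV
  obtain ⟨y, hxy⟩ := hdom x
  exact ⟨y, hxy, hxU, interior_subset (hxV y hxy)⟩

lemma cod_inter_prod_mem_nhds [CompactSpace X] {R : SetRel X Y} (hR : IsClosed R)
    (hcod : ∀ y, ∃ x, (x, y) ∈ R) {b : Y} {U : Set X} {V : Set Y}
    (hU : ∀ x, (x, b) ∈ R → x ∈ interior U) (hV : V ∈ 𝓝 b) : (R ∩ U ×ˢ V).cod ∈ 𝓝 b :=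
  mem_of_superset (dom_inter_prod_mem_nhds (R := R.inv) (hR.preimage continuous_swap) hcod hV hU)
    fun _ ⟨x, hxy, hy, hx⟩ ↦ ⟨x, hxy, hx, hy⟩

end Topology

lemma exists_mem_union_inv_union_prod {S : SetRel X X} {C : Set X}
    (hC : Cᶜ ⊆ S.dom ∪ S.cod) (x : X) : ∃ y, (x, y) ∈ S ∪ S.inv ∪ C ×ˢ C := by
  by_cases hx : x ∈ C
  · exact ⟨x, .inr ⟨hx, hx⟩⟩
  · obtain ⟨y, hxy⟩ | ⟨y, hyx⟩ := hC hx
    · exact ⟨y, .inl (.inl hxy)⟩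
    · exact ⟨y, .inl (.inr hyx)⟩

lemma mem_union_inv_union_prod_iff_of_notMem_cod {S : SetRel X X} {C : Set X} {a x : X}
    (haC : a ∉ C) (ha : a ∉ S.cod) : (a, x) ∈ S ∪ S.inv ∪ C ×ˢ C ↔ (a, x) ∈ S := by
  refine ⟨?_, fun h ↦ .inl (.inl h)⟩
  rintro ((h | h) | h)
  exacts [h, (ha ⟨x, h⟩).elim, (haC h.1).elim]

lemma mem_union_inv_union_prod_iff_of_notMem_dom {S : SetRel X X} {C : Set X} {b x : X}
    (hbC : b ∉ C) (hb : b ∉ S.dom) : (b, x) ∈ S ∪ S.inv ∪ C ×ˢ C ↔ (x, b) ∈ S := by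
  refine ⟨?_, fun h ↦ .inl (.inr h)⟩
  rintro ((h | h) | h)
  exacts [(hb ⟨x, h⟩).elim, h, (hbC h.1).elim]

end SetRel

open SetRel

section

variable {X : Type*} [TopologicalSpace X]

theorem exists_local_of_symm_total [CompactSpace X] [T2Space X] {a b : X} (hab : a ≠ b)
    {R : SetRel X X} (hR : IsClosed R) (hsymm : ∀ p ∈ R, p.swap ∈ R)
    (htotal : ∀ x, ∃ y, (x, y) ∈ R) (ha : ∀ x, (a, x) ∈ R ↔ x = b)
    (hb : ∀ x, (b, x) ∈ R ↔ x = a) :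
    ∃ S : SetRel X X, IsClosed S ∧ a ∈ interior S.dom ∧ b ∈ interior S.cod ∧
      Disjoint S.dom S.cod ∧ (∀ x, (x, b) ∈ S ↔ x = a) ∧ ∀ y, (a, y) ∈ S ↔ y = b := by
  have hcomm {x y : X} : (x, y) ∈ R ↔ (y, x) ∈ R := ⟨hsymm (x, y), hsymm (y, x)⟩
  obtain ⟨U, ⟨hUa, hUc⟩, V, ⟨hVb, hVc⟩, hUV⟩ :=
    ((closed_nhds_basis a).disjoint_iff (closed_nhds_basis b)).1 (disjoint_nhds_nhds.2 hab)
  have haU : a ∈ interior U := mem_interior_iff_mem_nhds.2 hUa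
  have hbV : b ∈ interior V := mem_interior_iff_mem_nhds.2 hVb
  refine ⟨R ∩ U ×ˢ V, hR.inter (hUc.prod hVc), ?_, ?_, ?_, fun x ↦ ⟨?_, ?_⟩, fun y ↦ ⟨?_, ?_⟩⟩
  · refine mem_interior_iff_mem_nhds.2 (dom_inter_prod_mem_nhds hR htotal hUa fun y hy ↦ ?_)
    rwa [(ha y).1 hy]
  · refine mem_interior_iff_mem_nhds.2 <| cod_inter_prod_mem_nhds hR
      (fun y ↦ (htotal y).imp fun _ ↦ hcomm.1) (fun x hx ↦ ?_) hVb
    rwa [(hb x).1 (hcomm.1 hx)]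
  · exact hUV.mono (fun x ⟨_, _, hx, _⟩ ↦ hx) (fun y ⟨_, _, _, hy⟩ ↦ hy)
  · exact fun h ↦ (hb x).1 (hcomm.1 h.1)
  · rintro rfl
    exact ⟨(ha _).2 rfl, interior_subset haU, interior_subset hbV⟩
  · exact fun h ↦ (ha y).1 h.1
  · rintro rfl
    exact ⟨(ha _).2 rfl, interior_subset haU, interior_subset hbV⟩

theorem exists_symm_total_of_local {a b : X} {S : SetRel X X} (hS : IsClosed S)
    (ha : a ∈ interior S.dom) (hb : b ∈ interior S.cod) (hdisj : Disjoint S.dom S.cod)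
    (hSb : ∀ x, (x, b) ∈ S ↔ x = a) (hSa : ∀ y, (a, y) ∈ S ↔ y = b) :
    ∃ R : SetRel X X, IsClosed R ∧ (∀ p ∈ R, p.swap ∈ R) ∧ (∀ x, ∃ y, (x, y) ∈ R) ∧
      (∀ x, (a, x) ∈ R ↔ x = b) ∧ ∀ x, (b, x) ∈ R ↔ x = a := by
  set C := (interior S.dom ∪ interior S.cod)ᶜ
  have hC : IsClosed C := (isOpen_interior.union isOpen_interior).isClosed_compl
  refine ⟨S ∪ S.inv ∪ C ×ˢ C, (hS.union (hS.preimage continuous_swap)).union (hC.prod hC),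
    ?_, exists_mem_union_inv_union_prod ?_, fun x ↦ ?_, fun x ↦ ?_⟩
  · rintro ⟨x, y⟩ ((h | h) | h)
    exacts [.inl (.inr h), .inl (.inl h), .inr h.symm]
  · rw [compl_compl]
    exact union_subset_union interior_subset interior_subset
  · rw [mem_union_inv_union_prod_iff_of_notMem_cod (notMem_compl_iff.2 (.inl ha))
      (hdisj.notMem_of_mem_left (interior_subset ha))]
    exact hSa x
  · rw [mem_union_inv_union_prod_iff_of_notMem_dom (notMem_compl_iff.2 (.inr hb))
      (hdisj.notMem_of_mem_right (interior_subset hb))]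
    exact hSb x

end

/-- For distinct `a, b` in a compact Hausdorff space `X`, there is a symmetric closed
relation `R` on `X` with full domain satisfying `a R x ↔ x = b` and `b R x ↔ x = a`
iff there is a closed relation `S` whose domain is a neighborhood of `a`, whose range
is a neighborhood of `b` disjoint from the domain, with `x S b ↔ x = a` and
`a S y ↔ y = b`. -/
theorem represent_iff_local {X : Type*} [TopologicalSpace X] [CompactSpace X] [T2Space X]
    {a b : X} (hab : a ≠ b) :
    (∃ R : Set (X × X), IsClosed R ∧ (∀ p ∈ R, Prod.swap p ∈ R) ∧
        (∀ x : X, ∃ y : X, (x, y) ∈ R) ∧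
        (∀ x : X, (a, x) ∈ R ↔ x = b) ∧ (∀ x : X, (b, x) ∈ R ↔ x = a)) ↔
    (∃ S : Set (X × X), IsClosed S ∧
        a ∈ interior {x : X | ∃ y : X, (x, y) ∈ S} ∧
        b ∈ interior {y : X | ∃ x : X, (x, y) ∈ S} ∧
        Disjoint {x : X | ∃ y : X, (x, y) ∈ S} {y : X | ∃ x : X, (x, y) ∈ S} ∧
        (∀ x : X, (x, b) ∈ S ↔ x = a) ∧ (∀ y : X, (a, y) ∈ S ↔ y = b)) :=
  ⟨fun ⟨_, hR, hsymm, htotal, ha, hb⟩ ↦ exists_local_of_symm_total hab hR hsymm htotal ha hb,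
    fun ⟨_, hS, ha, hb, hdisj, hSb, hSa⟩ ↦ exists_symm_total_of_local hS ha hb hdisj hSb hSa⟩
end

section
/- If a ≡ₚ b in a compact Hausdorff space X, then the neighborhood filters of a and b (ordered by reverse inclusion) are Tukey equivalent. -/
/-!
Write `Y`, `f`, `g` for the data of the pin equivalence. Since `Y` is compact and `X` Hausdorff,
`f` is a closed map, so for every open `U ⊆ Y` the set `kernImage f U = {x | f ⁻¹' {x} ⊆ U}`
is open. Hence `N ↦ {x | f ⁻¹' {x} ⊆ g ⁻¹' (f ⁻¹' interior N)}` sends neighbourhoods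
of `b` to open neighbourhoods of `a`, and it is convergent because the fibre over `b` is
exactly the `g`-image of the fibre over `a`. Pin equivalence is symmetric (replace `g` by `g⁻¹`),
which gives the map in the other direction.
-/

universe u

open Set

theorem PinEquiv.symm {X : Type u} [TopologicalSpace X] {a b : X} (h : PinEquiv a b) :
    PinEquiv b a := by
  obtain ⟨Y, _, _, _, f, g, hf, hf_surj, hg⟩ := h
  refine ⟨Y, ‹_›, ‹_›, ‹_›, f, g.symm, hf, hf_surj, ?_⟩
  rw [← hg, image_image]
  simp

theorem exists_convergent_nhds_map_of_image_fiber_eq {X Y : Type*} [TopologicalSpace X]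
    [TopologicalSpace Y] {f : Y → X} (hf : Continuous f) (hf_closed : IsClosedMap f)
    (hf_surj : Function.Surjective f) (g : Y ≃ₜ Y) {a b : X}
    (hg : g '' (f ⁻¹' {a}) = f ⁻¹' {b}) :
    ∃ F : Set X → Set X,
      (∀ N : Set X, b ∈ interior N → a ∈ interior (F N)) ∧
      ∀ M : Set X, a ∈ interior M → ∃ N₀ : Set X, b ∈ interior N₀ ∧
        ∀ N : Set X, b ∈ interior N → N ⊆ N₀ → F N ⊆ M := by
  have isOpen_kernImage {U : Set Y} (hU : IsOpen U) : IsOpen (kernImage f U) :=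
    isClosedMap_iff_kernImage.mp hf_closed hU
  refine ⟨fun N ↦ kernImage f (g ⁻¹' (f ⁻¹' interior N)), fun N hN ↦ ?_, fun M hM ↦ ?_⟩
  · rw [(isOpen_kernImage ((isOpen_interior.preimage hf).preimage g.continuous)).interior_eq]
    intro y hy
    have hgy : f (g y) = b := hg.subset (mem_image_of_mem g hy)
    simpa only [mem_preimage, hgy] using hN
  refine ⟨kernImage f (g '' (f ⁻¹' interior M)), ?_, fun N _ hN₀ x hx ↦ ?_⟩
  · rw [(isOpen_kernImage (g.isOpenMap _ (isOpen_interior.preimage hf))).interior_eq,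
      ← singleton_subset_iff, subset_kernImage_iff, ← hg]
    exact image_mono (preimage_mono (singleton_subset_iff.mpr hM))
  · obtain ⟨y, rfl⟩ := hf_surj x
    obtain ⟨y', hy', hgy'⟩ := hN₀ (interior_subset (hx rfl)) rfl
    rw [g.injective hgy'] at hy'
    exact interior_subset hy'

theorem PinEquiv.exists_convergent_nhds_map {X : Type u} [TopologicalSpace X] [T2Space X]
    {a b : X} (h : PinEquiv a b) :
    ∃ F : Set X → Set X,
      (∀ N : Set X, b ∈ interior N → a ∈ interior (F N)) ∧
      ∀ M : Set X, a ∈ interior M → ∃ N₀ : Set X, b ∈ interior N₀ ∧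
        ∀ N : Set X, b ∈ interior N → N ⊆ N₀ → F N ⊆ M := by
  obtain ⟨Y, _, _, _, f, g, hf, hf_surj, hg⟩ := h
  exact exists_convergent_nhds_map_of_image_fiber_eq hf hf.isClosedMap hf_surj g hg

theorem pinEquiv_tukey_equiv_general {X : Type u} [TopologicalSpace X]
    [T2Space X] {a b : X} (h : PinEquiv a b) :
    (∃ f : Set X → Set X,
        (∀ N : Set X, b ∈ interior N → a ∈ interior (f N)) ∧
        ∀ M : Set X, a ∈ interior M → ∃ N₀ : Set X, b ∈ interior N₀ ∧
          ∀ N : Set X, b ∈ interior N → N ⊆ N₀ → f N ⊆ M) ∧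
    (∃ g : Set X → Set X,
        (∀ M : Set X, a ∈ interior M → b ∈ interior (g M)) ∧
        ∀ N : Set X, b ∈ interior N → ∃ M₀ : Set X, a ∈ interior M₀ ∧
          ∀ M : Set X, a ∈ interior M → M ⊆ M₀ → g M ⊆ N) :=
  ⟨h.exists_convergent_nhds_map, h.symm.exists_convergent_nhds_map⟩

/-- If `a` and `b` are pin equivalent in a compact Hausdorff space, then their
neighborhood filters (ordered by reverse inclusion `⊇`) are Tukey equivalent. -/
theorem pinEquiv_tukey_equiv {X : Type u} [TopologicalSpace X] [CompactSpace X]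
    [T2Space X] {a b : X} (h : PinEquiv a b) :
    (∃ f : Set X → Set X,
        (∀ N : Set X, b ∈ interior N → a ∈ interior (f N)) ∧
        ∀ M : Set X, a ∈ interior M → ∃ N₀ : Set X, b ∈ interior N₀ ∧
          ∀ N : Set X, b ∈ interior N → N ⊆ N₀ → f N ⊆ M) ∧
    (∃ g : Set X → Set X,
        (∀ M : Set X, a ∈ interior M → b ∈ interior (g M)) ∧
        ∀ N : Set X, b ∈ interior N → ∃ M₀ : Set X, a ∈ interior M₀ ∧
          ∀ M : Set X, a ∈ interior M → M ⊆ M₀ → g M ⊆ N) :=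
  pinEquiv_tukey_equiv_general h
end

section
/- In a compact Hausdorff space X, if a ≡ₚ b and a is not a weak P-point, then b is not a weak P-point. -/
/-!
Call a set `F` countably approachable if some countable set disjoint from `F` has a limit point
in `F`; for `F = {p}` this says that `p` is not a weak P-point. This property lifts from `F` to
`f ⁻¹' F` along a closed surjection `f` (choose a preimage of each point of the countable set),
is transported by homeomorphisms, and descends from `f ⁻¹' F` to `F` along continuous maps.
Given the representation `g '' (f ⁻¹' {a}) = f ⁻¹' {b}`, the fibre over `a` is approachable,
hence so is the fibre over `b`, hence so is `{b}`.
-/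

universe u

open Set Function

section CountablyApproachable

variable {X Y : Type*} [TopologicalSpace X] [TopologicalSpace Y]

def CountablyApproachable (F : Set X) : Prop :=
  ∃ S : Set X, S.Countable ∧ Disjoint S F ∧ (closure S ∩ F).Nonempty

theorem countablyApproachable_singleton_iff {p : X} :
    CountablyApproachable {p} ↔ ∃ C : Set X, C.Countable ∧ p ∉ C ∧ p ∈ closure C := by
  simp only [CountablyApproachable, disjoint_singleton_right, inter_singleton_nonempty]

theorem CountablyApproachable.preimage_of_isClosedMap {f : Y → X} (hf : IsClosedMap f)
    (hsurj : Surjective f) {F : Set X} (hF : CountablyApproachable F) :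
    CountablyApproachable (f ⁻¹' F) := by
  obtain ⟨S, hS, hSF, x, hxS, hxF⟩ := hF
  set T := surjInv hsurj '' S
  have himage : f '' T = S := by
    rw [image_image]; simp only [surjInv_eq hsurj, image_id']
  have hclosure : closure S ⊆ f '' closure T :=
    closure_minimal (himage.ge.trans (image_mono subset_closure)) (hf _ isClosed_closure)
  obtain ⟨y, hyT, rfl⟩ := hclosure hxS
  exact ⟨T, hS.image _, disjoint_image_left.1 (by rwa [himage]), y, hyT, hxF⟩

theorem CountablyApproachable.image_homeomorph (g : X ≃ₜ Y) {F : Set X}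
    (hF : CountablyApproachable F) : CountablyApproachable (g '' F) := by
  obtain ⟨S, hS, hSF, hSF'⟩ := hF
  refine ⟨g '' S, hS.image g, (disjoint_image_iff g.injective).2 hSF, ?_⟩
  rw [← g.image_closure, ← image_inter g.injective]
  exact hSF'.image g

theorem CountablyApproachable.of_preimage {f : Y → X} (hf : Continuous f) {F : Set X}
    (hF : CountablyApproachable (f ⁻¹' F)) : CountablyApproachable F := by
  obtain ⟨S, hS, hSF, y, hyS, hyF⟩ := hF
  exact ⟨f '' S, hS.image f, disjoint_image_left.2 hSF, f y,
    image_closure_subset_closure_image hf (mem_image_of_mem f hyS), hyF⟩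

end CountablyApproachable

theorem pinEquiv_not_weakPPoint_general {X : Type u} [TopologicalSpace X]
    [T2Space X] {a b : X} (h : PinEquiv a b)
    (ha : ∃ C : Set X, C.Countable ∧ a ∉ C ∧ a ∈ closure C) :
    ∃ D : Set X, D.Countable ∧ b ∉ D ∧ b ∈ closure D := by
  obtain ⟨Y, _, _, _, f, g, hf, hsurj, hg⟩ := h
  have hfa : CountablyApproachable (f ⁻¹' {a}) :=
    (countablyApproachable_singleton_iff.2 ha).preimage_of_isClosedMap hf.isClosedMap hsurj
  have hfb : CountablyApproachable (f ⁻¹' {b}) := hg ▸ hfa.image_homeomorph g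
  exact countablyApproachable_singleton_iff.1 (hfb.of_preimage hf)

/-- In a compact Hausdorff space, if `a ≡ₚ b` and `a` is not a weak P-point, then
neither is `b`. -/
theorem pinEquiv_not_weakPPoint {X : Type u} [TopologicalSpace X] [CompactSpace X]
    [T2Space X] {a b : X} (h : PinEquiv a b)
    (ha : ∃ C : Set X, C.Countable ∧ a ∉ C ∧ a ∈ closure C) :
    ∃ D : Set X, D.Countable ∧ b ∉ D ∧ b ∈ closure D :=
  pinEquiv_not_weakPPoint_general h ha
end

section
/- Let X be a compact Hausdorff space and let a ≠ b have independent neighborhood subbases 𝒜 and ℬ respectively with a bijection between them. Then a ≡ₚ b. -/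
universe u

/-- A family of sets is independent if for all finite nonempty disjoint subfamilies
`F`, `G`, the intersection of `F` is not covered by the union of `G`. -/
def IndependentFamily {X : Type u} (E : Set (Set X)) : Prop :=
  ∀ F G : Set (Set X), F ⊆ E → G ⊆ E → F.Finite → G.Finite → F.Nonempty → G.Nonempty →
    Disjoint F G → ¬ (⋂₀ F ⊆ ⋃₀ G)

/-! Index both subbases by `𝒜`, and shrink each set to lie in the closure `W_a`, resp. `W_b`, of
one finite intersection, chosen so that `W_a` and `W_b` are disjoint. For a point `x` consider
the boolean vectors `ε` that are limits of membership patterns `i ↦ (z ∈ S i)` as `z → x`.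
Relate `x` to `y` when some `ε` is such a limit for `x` and the `𝒜`-sets and for `y` and the
`ℬ`-sets, and some `δ` is one for `x` and the `ℬ`-sets and for `y` and the `𝒜`-sets. Compactness
of `X` and of `𝒜 → Bool` makes this symmetric relation closed. Near `a` every `𝒜`-set eventually
contains `z`, so `ε` is all `true`, which forces `y = b` because the `ℬ`-sets generate the
neighbourhoods of `b`. Independence makes every pattern that is `true` on the chosen finite index
set approximable by `ℬ`-sets, so by compactness each point of `W_a` has a partner in `W_b` (and
vice versa), while points outside `W_a ∪ W_b` are related to themselves. The relation itself,
with the first projection and the swap, witnesses `a ≡ₚ b`. -/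

open Set Filter Topology

theorem PinEquiv.of_isClosed_relation {X : Type u} [TopologicalSpace X] [CompactSpace X] [T2Space X]
    {a b : X} (R : Set (X × X)) (hR : IsClosed R) (hsymm : ∀ p ∈ R, p.swap ∈ R)
    (hdom : ∀ x, ∃ y, (x, y) ∈ R) (ha : ∀ y, (a, y) ∈ R → y = b)
    (hb : ∀ y, (b, y) ∈ R → y = a) : PinEquiv a b := by
  have : CompactSpace R := isCompact_iff_compactSpace.mp hR.isCompact
  let g : R ≃ₜ R := (Homeomorph.prodComm X X).subtype fun p => ⟨hsymm p, hsymm p.swap⟩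
  refine ⟨R, inferInstance, inferInstance, inferInstance, fun p => p.1.1, g,
    continuous_fst.comp continuous_subtype_val, fun x => ?_, ?_⟩
  · obtain ⟨y, hy⟩ := hdom x
    exact ⟨⟨(x, y), hy⟩, rfl⟩
  · ext ⟨⟨x, y⟩, hxy⟩
    rw [g.image_eq_preimage_symm]
    change y = a ↔ x = b
    constructor
    · rintro rfl
      exact ha x (hsymm _ hxy)
    · rintro rfl
      exact hb y hxy

section Pattern

variable {X I : Type*}

open Classical in
noncomputable def pattern (S : I → Set X) (x : X) : I → Bool := fun i => decide (x ∈ S i)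

theorem pattern_eq_true {S : I → Set X} {x : X} {i : I} : pattern S x i = true ↔ x ∈ S i := by
  simp [pattern]

theorem mem_closure_range_pattern {S : I → Set X} {ε : I → Bool}
    (h : ∀ F : Finset I, ∃ z, ∀ i ∈ F, pattern S z i = ε i) :
    ε ∈ closure (range (pattern S)) := by
  refine mem_closure_iff_nhds.mpr fun U hU => ?_
  rw [nhds_pi, Filter.mem_pi] at hU
  obtain ⟨F, hF, t, ht, hFt⟩ := hU
  obtain ⟨z, hz⟩ := h hF.toFinset
  refine ⟨pattern S z, hFt fun i hi => ?_, z, rfl⟩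
  rw [hz i (hF.mem_toFinset.mpr hi)]
  exact mem_of_mem_nhds (ht i)

variable {ε : I → Bool}

theorem IndependentFamily.exists_pattern_eq {𝒮 : Set (Set X)}
    (h𝒮 : IndependentFamily 𝒮) {S : I → Set X} (hS : ∀ i, S i ∈ 𝒮) (hinj : Function.Injective S)
    {p : X} (hp : ∀ i, p ∈ S i) {F : Finset I} (hε : ∃ i ∈ F, ε i = true) :
    ∃ z, ∀ i ∈ F, pattern S z i = ε i := by
  by_cases hall : ∀ i ∈ F, ε i = true
  · exact ⟨p, fun i hi => (hall i hi).symm ▸ pattern_eq_true.mpr (hp i)⟩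
  obtain ⟨j, hjF, hj⟩ : ∃ j ∈ F, ε j = false := by simpa using hall
  obtain ⟨i₀, hi₀F, hi₀⟩ := hε
  have hfin : ∀ b : Bool, (S '' {i | i ∈ F ∧ ε i = b}).Finite := fun b =>
    (F.finite_toSet.subset fun _ hi => hi.1).image S
  have hdisj : Disjoint (S '' {i | i ∈ F ∧ ε i = true}) (S '' {i | i ∈ F ∧ ε i = false}) := by
    rw [disjoint_left]
    rintro _ ⟨i, ⟨-, hi⟩, rfl⟩ ⟨k, ⟨-, hk⟩, hki⟩
    rw [hinj hki, hi] at hk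
    exact Bool.noConfusion hk
  obtain ⟨z, hzF, hzG⟩ := not_subset.mp <| h𝒮 _ _
    (image_subset_iff.mpr fun i _ => hS i) (image_subset_iff.mpr fun i _ => hS i)
    (hfin true) (hfin false) ⟨_, mem_image_of_mem S ⟨hi₀F, hi₀⟩⟩
    ⟨_, mem_image_of_mem S ⟨hjF, hj⟩⟩ hdisj
  refine ⟨z, fun i hi => ?_⟩
  cases hεi : ε i
  · exact Bool.eq_false_iff.mpr fun h => hzG ⟨S i, ⟨i, ⟨hi, hεi⟩, rfl⟩, pattern_eq_true.mp h⟩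
  · exact pattern_eq_true.mpr (hzF _ ⟨i, ⟨hi, hεi⟩, rfl⟩)

end Pattern

section PatternClosure

variable {X I : Type*} [TopologicalSpace X]

/-- `(x, ε) ∈ patternClosure S` iff every neighbourhood of `x` meets every finite cell
`⋂_{i ∈ F, ε i} S i ∩ ⋂_{i ∈ F, ¬ ε i} (S i)ᶜ`. -/
def patternClosure (S : I → Set X) : Set (X × (I → Bool)) :=
  closure (range fun x => (x, pattern S x))

def patternMatch (S T : I → Set X) : Set (X × X) :=
  {p | ∃ ε, (p.1, ε) ∈ patternClosure S ∧ (p.2, ε) ∈ patternClosure T}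

variable {S T : I → Set X} {x y : X} {ε : I → Bool}

theorem mk_pattern_mem_patternClosure (S : I → Set X) (x : X) :
    (x, pattern S x) ∈ patternClosure S :=
  subset_closure ⟨x, rfl⟩

theorem mk_false_mem_patternClosure (hx : ∀ i, x ∉ S i) :
    (x, fun _ => false) ∈ patternClosure S := by
  convert mk_pattern_mem_patternClosure S x
  simpa [pattern] using hx _

theorem exists_pattern_eq_of_mem_patternClosure (h : (x, ε) ∈ patternClosure S) {U : Set X}
    (hU : U ∈ 𝓝 x) (F : Finset I) : ∃ z ∈ U, ∀ i ∈ F, pattern S z i = ε i := by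
  have hF : (F : Set I).pi (fun i => {ε i}) ∈ 𝓝 ε :=
    set_pi_mem_nhds F.finite_toSet fun i _ => (isOpen_discrete _).mem_nhds rfl
  obtain ⟨_, ⟨hzU, hzF⟩, z, rfl⟩ := mem_closure_iff_nhds.mp h _ (prod_mem_nhds hU hF)
  exact ⟨z, hzU, hzF⟩

theorem eq_true_of_mem_patternClosure (h : (x, ε) ∈ patternClosure S) {i : I}
    (hi : S i ∈ 𝓝 x) : ε i = true := by
  obtain ⟨z, hz, hzi⟩ := exists_pattern_eq_of_mem_patternClosure h hi {i}
  rw [← hzi i (Finset.mem_singleton_self i), pattern_eq_true]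
  exact hz

theorem mem_closure_biInter_of_mem_patternClosure (h : (x, ε) ∈ patternClosure S)
    {F : Finset I} (hF : ∀ i ∈ F, ε i = true) : x ∈ closure (⋂ i ∈ F, S i) := by
  refine mem_closure_iff_nhds.mpr fun U hU => ?_
  obtain ⟨z, hzU, hz⟩ := exists_pattern_eq_of_mem_patternClosure h hU F
  exact ⟨z, hzU, mem_iInter₂.mpr fun i hi => pattern_eq_true.mp ((hz i hi).trans (hF i hi))⟩

theorem exists_mem_patternClosure_of_le_nhds (u : Ultrafilter X) (hu : ↑u ≤ 𝓝 x) :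
    ∃ ε, (x, ε) ∈ patternClosure S ∧ ∀ i, ε i = true ↔ S i ∈ u := by
  classical
  refine ⟨fun i => decide (S i ∈ u), ?_, fun i => decide_eq_true_iff⟩
  have hpattern : Tendsto (pattern S) u (𝓝 fun i => decide (S i ∈ u)) := by
    refine tendsto_pi_nhds.mpr fun i => ?_
    rw [nhds_discrete, tendsto_pure]
    by_cases hi : S i ∈ u
    · filter_upwards [hi] with z hz
      simp [pattern, hz, hi]
    · filter_upwards [Ultrafilter.compl_mem_iff_notMem.mpr hi] with z hz
      simp only [pattern, hi]
      simpa using hz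
  have hid : Tendsto id (u : Filter X) (𝓝 x) := hu
  exact mem_closure_of_tendsto (hid.prodMk_nhds hpattern) (Eventually.of_forall mem_range_self)

theorem exists_mem_patternClosure [CompactSpace X] (hε : ε ∈ closure (range (pattern S))) :
    ∃ y, (y, ε) ∈ patternClosure S := by
  have hclosed : IsClosed (Prod.snd '' patternClosure S) :=
    isClosedMap_snd_of_compactSpace _ isClosed_closure
  have hrange : range (pattern S) ⊆ Prod.snd '' patternClosure S := by
    rintro _ ⟨x, rfl⟩
    exact ⟨_, mk_pattern_mem_patternClosure S x, rfl⟩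
  obtain ⟨⟨y, _⟩, hy, rfl⟩ := closure_minimal hrange hclosed hε
  exact ⟨y, hy⟩

theorem isClosed_patternMatch [CompactSpace X] (S T : I → Set X) :
    IsClosed (patternMatch S T) := by
  have : patternMatch S T = Prod.fst '' {q : (X × X) × (I → Bool) |
      (q.1.1, q.2) ∈ patternClosure S ∧ (q.1.2, q.2) ∈ patternClosure T} := by
    ext; simp [patternMatch]
  rw [this]
  exact isClosedMap_fst_of_compactSpace _ <|
    (isClosed_closure.preimage (by fun_prop)).inter (isClosed_closure.preimage (by fun_prop))

theorem swap_mem_patternMatch {p : X × X} : p.swap ∈ patternMatch S T ↔ p ∈ patternMatch T S := by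
  simp [patternMatch, and_comm]

end PatternClosure

section Subbasis

variable {X I : Type*}

theorem mem_generate_range_iff {S : I → Set X} {U : Set X} :
    U ∈ generate (range S) ↔ ∃ J : Finset I, ⋂ i ∈ J, S i ⊆ U := by
  rw [generate_eq_biInf, iInf_range, (hasBasis_iInf_principal_finite S).mem_iff]
  simp only [exists_finite_iff_finset, Finset.set_biInter_coe]

variable [TopologicalSpace X] {S T : I → Set X} {p q : X}

theorem mem_nhds_of_generate_range_eq (hS : generate (range S) = 𝓝 p) (i : I) : S i ∈ 𝓝 p :=
  le_generate_iff.mp hS.ge ⟨i, rfl⟩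

variable [T3Space X]

theorem eq_of_forall_mem_closure_biInter (hS : generate (range S) ≤ 𝓝 p) {y : X}
    (hy : ∀ J : Finset I, y ∈ closure (⋂ i ∈ J, S i)) : y = p := by
  by_contra hne
  obtain ⟨N, hN, hNc, hNy⟩ :=
    exists_mem_nhds_isClosed_subset (isOpen_compl_singleton.mem_nhds (Ne.symm hne))
  obtain ⟨J, hJ⟩ := mem_generate_range_iff.mp (hS hN)
  exact hNy (closure_minimal hJ hNc (hy J)) rfl

theorem exists_finset_disjoint_closure_biInter (hpq : p ≠ q) (hS : generate (range S) ≤ 𝓝 p)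
    (hT : generate (range T) ≤ 𝓝 q) :
    ∃ J : Finset I, Disjoint (closure (⋂ i ∈ J, S i)) (closure (⋂ i ∈ J, T i)) := by
  classical
  obtain ⟨U, ⟨hU, hUc⟩, V, ⟨hV, hVc⟩, hUV⟩ :=
    ((closed_nhds_basis p).disjoint_iff (closed_nhds_basis q)).mp (disjoint_nhds_nhds.mpr hpq)
  obtain ⟨J₁, hJ₁⟩ := mem_generate_range_iff.mp (hS hU)
  obtain ⟨J₂, hJ₂⟩ := mem_generate_range_iff.mp (hT hV)
  refine ⟨J₁ ∪ J₂, hUV.mono (closure_minimal ?_ hUc) (closure_minimal ?_ hVc)⟩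
  · exact (biInter_subset_biInter_left Finset.subset_union_left).trans hJ₁
  · exact (biInter_subset_biInter_left Finset.subset_union_right).trans hJ₂

end Subbasis

section Localize

variable {X I : Type*} [TopologicalSpace X]

def localize (S : I → Set X) (J : Finset I) : I → Set X :=
  fun i => S i ∩ closure (⋂ j ∈ J, S j)

variable {S : I → Set X} {J : Finset I}

theorem biInter_localize : ⋂ j ∈ J, localize S J j = ⋂ j ∈ J, S j :=
  Subset.antisymm (iInter₂_mono fun _ _ => inter_subset_left) fun _ hz =>
    mem_iInter₂.mpr fun j hj => ⟨mem_iInter₂.mp hz j hj, subset_closure hz⟩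

theorem localize_subset_closure_biInter (i : I) :
    localize S J i ⊆ closure (⋂ j ∈ J, localize S J j) := by
  rw [biInter_localize]
  exact inter_subset_right

theorem generate_range_localize {p : X} (hS : generate (range S) = 𝓝 p) :
    generate (range (localize S J)) = 𝓝 p := by
  have hmem := mem_nhds_of_generate_range_eq hS
  refine le_antisymm (fun U hU => ?_) (le_generate_iff.mpr ?_)
  · obtain ⟨F, hF⟩ := mem_generate_range_iff.mp (hS ▸ hU)
    exact mem_generate_range_iff.mpr ⟨F, (iInter₂_mono fun _ _ => inter_subset_left).trans hF⟩
  · rintro _ ⟨i, rfl⟩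
    exact inter_mem (hmem i)
      (mem_of_superset ((biInter_finset_mem J).mpr fun j _ => hmem j) subset_closure)

theorem IndependentFamily.mem_closure_range_pattern_localize {𝒮 : Set (Set X)}
    (h𝒮 : IndependentFamily 𝒮) (hS : ∀ i, S i ∈ 𝒮) (hinj : Function.Injective S) {p : X}
    (hp : ∀ i, p ∈ S i) (hJ : J.Nonempty) {ε : I → Bool} (hε : ∀ j ∈ J, ε j = true) :
    ε ∈ closure (range (pattern (localize S J))) := by
  classical
  refine mem_closure_range_pattern fun F => ?_
  obtain ⟨j, hj⟩ := hJ
  obtain ⟨z, hz⟩ := h𝒮.exists_pattern_eq hS hinj hp (F := F ∪ J)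
    ⟨j, Finset.mem_union_right _ hj, hε j hj⟩
  have hzJ : z ∈ ⋂ j ∈ J, S j := mem_iInter₂.mpr fun i hi =>
    pattern_eq_true.mp ((hz i (Finset.mem_union_right _ hi)).trans (hε i hi))
  refine ⟨z, fun i hi => ?_⟩
  rw [← hz i (Finset.mem_union_left _ hi)]
  simp [pattern, localize, subset_closure hzJ]

end Localize

section Match

variable {X I : Type*} [TopologicalSpace X] {S T : I → Set X} {J : Finset I}

theorem eq_of_mem_patternMatch [T3Space X] {p q y : X} (hS : ∀ i, S i ∈ 𝓝 p)
    (hT : generate (range T) ≤ 𝓝 q) (h : (p, y) ∈ patternMatch S T) : y = q := by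
  obtain ⟨ε, hpε, hyε⟩ := h
  have hε : ∀ i, ε i = true := fun i => eq_true_of_mem_patternClosure hpε (hS i)
  exact eq_of_forall_mem_closure_biInter hT fun _ =>
    mem_closure_biInter_of_mem_patternClosure hyε fun i _ => hε i

theorem exists_mem_patternMatch_inter [CompactSpace X]
    (hSW : ∀ i, S i ⊆ closure (⋂ j ∈ J, S j)) (hTW : ∀ i, T i ⊆ closure (⋂ j ∈ J, T j))
    (hdisj : Disjoint (closure (⋂ j ∈ J, S j)) (closure (⋂ j ∈ J, T j)))
    (hT : ∀ ε : I → Bool, (∀ j ∈ J, ε j = true) → ε ∈ closure (range (pattern T)))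
    {x : X} (hx : x ∈ closure (⋂ j ∈ J, S j)) :
    ∃ y, (x, y) ∈ patternMatch S T ∩ patternMatch T S := by
  obtain ⟨u, huJ, hux⟩ := mem_closure_iff_ultrafilter.mp hx
  obtain ⟨ε, hxε, hεu⟩ := exists_mem_patternClosure_of_le_nhds (S := S) u hux
  have hεJ : ∀ j ∈ J, ε j = true := fun j hj =>
    (hεu j).mpr (mem_of_superset huJ (biInter_subset_of_mem hj))
  obtain ⟨y, hyε⟩ := exists_mem_patternClosure (hT ε hεJ)
  have hy : y ∈ closure (⋂ j ∈ J, T j) := mem_closure_biInter_of_mem_patternClosure hyε hεJ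
  refine ⟨y, ⟨ε, hxε, hyε⟩, fun _ => false, ?_, ?_⟩
  · exact mk_false_mem_patternClosure fun i hi => hdisj.notMem_of_mem_left hx (hTW i hi)
  · exact mk_false_mem_patternClosure fun i hi => hdisj.notMem_of_mem_left (hSW i hi) hy

end Match

theorem PinEquiv.of_localized_subbases {X : Type u} [TopologicalSpace X] [CompactSpace X]
    [T2Space X] {I : Type*} {S T : I → Set X} {p q : X} {J : Finset I}
    (hS : generate (range S) = 𝓝 p) (hT : generate (range T) = 𝓝 q)
    (hSW : ∀ i, S i ⊆ closure (⋂ j ∈ J, S j)) (hTW : ∀ i, T i ⊆ closure (⋂ j ∈ J, T j))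
    (hdisj : Disjoint (closure (⋂ j ∈ J, S j)) (closure (⋂ j ∈ J, T j)))
    (hSε : ∀ ε : I → Bool, (∀ j ∈ J, ε j = true) → ε ∈ closure (range (pattern S)))
    (hTε : ∀ ε : I → Bool, (∀ j ∈ J, ε j = true) → ε ∈ closure (range (pattern T))) :
    PinEquiv p q := by
  refine PinEquiv.of_isClosed_relation (patternMatch S T ∩ patternMatch T S)
    ((isClosed_patternMatch S T).inter (isClosed_patternMatch T S))
    (fun _ h => ⟨swap_mem_patternMatch.mpr h.2, swap_mem_patternMatch.mpr h.1⟩) (fun x => ?_)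
    (fun _ h => eq_of_mem_patternMatch (mem_nhds_of_generate_range_eq hS) hT.le h.1)
    (fun _ h => eq_of_mem_patternMatch (mem_nhds_of_generate_range_eq hT) hS.le h.2)
  by_cases hxS : x ∈ closure (⋂ j ∈ J, S j)
  · exact exists_mem_patternMatch_inter hSW hTW hdisj hTε hxS
  by_cases hxT : x ∈ closure (⋂ j ∈ J, T j)
  · rw [inter_comm]
    exact exists_mem_patternMatch_inter hTW hSW hdisj.symm hSε hxT
  have hS₀ := mk_false_mem_patternClosure (S := S) fun i hi => hxS (hSW i hi)
  have hT₀ := mk_false_mem_patternClosure (S := T) fun i hi => hxT (hTW i hi)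
  exact ⟨x, ⟨_, hS₀, hT₀⟩, _, hT₀, hS₀⟩

/-- If `a ≠ b` have independent neighborhood subbases `𝒜` and `ℬ` that are in bijection,
then `a ≡ₚ b`. -/
theorem pinEquiv_of_indep_subbases {X : Type u} [TopologicalSpace X] [CompactSpace X]
    [T2Space X] {a b : X} (hab : a ≠ b) (𝒜 ℬ : Set (Set X))
    (hA : Filter.generate 𝒜 = nhds a) (hB : Filter.generate ℬ = nhds b)
    (hAi : IndependentFamily 𝒜) (hBi : IndependentFamily ℬ)
    (hbij : Nonempty (𝒜 ≃ ℬ)) : PinEquiv a b := by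
  obtain ⟨e⟩ := hbij
  let A : 𝒜 → Set X := Subtype.val
  let B : 𝒜 → Set X := Subtype.val ∘ e
  have hA' : generate (range A) = 𝓝 a := by rwa [Subtype.range_coe]
  have hB' : generate (range B) = 𝓝 b := by rwa [EquivLike.range_comp, Subtype.range_coe]
  obtain ⟨J, hJ⟩ := exists_finset_disjoint_closure_biInter hab hA'.le hB'.le
  have hJne : J.Nonempty := by
    rw [Finset.nonempty_iff_ne_empty]
    rintro rfl
    simp only [Finset.notMem_empty, iInter_of_empty, iInter_univ, closure_univ,
      disjoint_self, bot_eq_empty, univ_eq_empty_iff] at hJ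
    exact hJ.false a
  have haA : ∀ i, a ∈ A i := fun i => mem_of_mem_nhds (mem_nhds_of_generate_range_eq hA' i)
  have hbB : ∀ i, b ∈ B i := fun i => mem_of_mem_nhds (mem_nhds_of_generate_range_eq hB' i)
  refine PinEquiv.of_localized_subbases (J := J) (generate_range_localize hA')
    (generate_range_localize hB') localize_subset_closure_biInter
    localize_subset_closure_biInter (by rwa [biInter_localize, biInter_localize])
    (fun ε hε => ?_) (fun ε hε => ?_)
  · exact hAi.mem_closure_range_pattern_localize (fun i => i.2) Subtype.val_injective haA hJne hε
  · exact hBi.mem_closure_range_pattern_localize (fun i => (e i).2)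
      (Subtype.val_injective.comp e.injective) hbB hJne hε
end

section
/- Every first countable, crowded (no isolated points), compact Hausdorff space is pin homogeneous. -/
universe u

/-! For `a ≠ b` it suffices to find a closed relation `R` on `X`, invariant under `Prod.swap`
and with full domain, in which `a` is related only to `b` and `b` only to `a`: then `Y = R`,
`f = Prod.fst` and `g = Prod.swap` witness `PinEquiv a b`.

By first countability and regularity there are open `U₀ ⊇ U₁ ⊇ ⋯` around `a` with
`closure Uₙ₊₁ ⊆ Uₙ` and `⋂ Uₙ = {a}`; since `a` is not isolated they can be chosen with all
shells `Kₙ = closure Uₙ \ Uₙ₊₁` nonempty. Take the same `Vₙ`, `Lₙ` at `b`, with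
`closure U₀ ∩ closure V₀ = ∅`. Let `R` relate `a` with `b`, each point of `Kₙ` with each point of
`Lₙ` (both ways), and each point outside `U₀ ∪ V₀` with itself. The shells cover `U₀ \ {a}`, so
`R` has full domain, and a point close to `a` lies in a shell of high index, so its partners are
close to `b`: this makes `R` closed. -/

open Set Filter Topology TopologicalSpace

section PinEquiv

variable {X : Type u} [TopologicalSpace X] [CompactSpace X] [T2Space X]

theorem PinEquiv.refl (a : X) : PinEquiv a a :=
  ⟨X, _, ‹_›, ‹_›, id, Homeomorph.refl X, continuous_id, Function.surjective_id, by simp⟩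

theorem pinEquiv_of_symmetric_relation {a b : X} (R : Set (X × X)) (hR : IsClosed R)
    (hsymm : Prod.swap ⁻¹' R = R) (hdom : ∀ x, ∃ y, (x, y) ∈ R)
    (ha : ∀ y, (a, y) ∈ R ↔ y = b) (hb : ∀ y, (b, y) ∈ R ↔ y = a) : PinEquiv a b := by
  have : CompactSpace R := isCompact_iff_compactSpace.mp hR.isCompact
  refine ⟨R, _, ‹_›, inferInstance, fun r => r.1.1,
    (Homeomorph.prodComm X X).sets (by rw [Homeomorph.coe_prodComm, hsymm]),
    continuous_fst.comp continuous_subtype_val, fun x => ?_, ?_⟩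
  · obtain ⟨y, hy⟩ := hdom x
    exact ⟨⟨(x, y), hy⟩, rfl⟩
  · ext ⟨⟨x, y⟩, hxy⟩
    simp only [mem_image, mem_preimage, mem_singleton_iff, Subtype.exists, Prod.exists]
    constructor
    · rintro ⟨_, y', hy', rfl, h⟩
      rw [← (ha y').1 hy']
      exact (congrArg (fun r : R => r.1.1) h).symm
    · rintro rfl
      obtain rfl := (hb y).1 hxy
      exact ⟨y, x, (ha x).2 rfl, rfl, rfl⟩

end PinEquiv

section Shells

variable {X : Type u} [TopologicalSpace X]

structure IsShrinkingNhds (a : X) (U : ℕ → Set X) : Prop where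
  isOpen : ∀ n, IsOpen (U n)
  mem : ∀ n, a ∈ U n
  closure_succ_subset : ∀ n, closure (U (n + 1)) ⊆ U n
  exists_notMem : ∀ x, x ≠ a → ∃ n, x ∉ U n

def shell (U : ℕ → Set X) (n : ℕ) : Set X := closure (U n) \ U (n + 1)

theorem isClosed_shell {U : ℕ → Set X} (hU : ∀ n, IsOpen (U n)) (n : ℕ) : IsClosed (shell U n) :=
  isClosed_closure.sdiff (hU (n + 1))

namespace IsShrinkingNhds

variable {a : X} {U : ℕ → Set X}

theorem antitone (hU : IsShrinkingNhds a U) : Antitone U :=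
  antitone_nat_of_succ_le fun n => subset_closure.trans (hU.closure_succ_subset n)

theorem notMem_shell (hU : IsShrinkingNhds a U) (n : ℕ) : a ∉ shell U n :=
  fun h => h.2 (hU.mem (n + 1))

theorem shell_subset_closure (hU : IsShrinkingNhds a U) {m n : ℕ} (hmn : m ≤ n) :
    shell U n ⊆ closure (U m) :=
  sdiff_subset.trans (closure_mono (hU.antitone hmn))

theorem exists_notMem_closure (hU : IsShrinkingNhds a U) {x : X} (hx : x ≠ a) :
    ∃ m, x ∉ closure (U (m + 1)) :=
  (hU.exists_notMem x hx).imp fun _ hm h => hm (hU.closure_succ_subset _ h)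

theorem exists_mem_shell (hU : IsShrinkingNhds a U) {x : X} (hx₀ : x ∈ U 0) (hx : x ≠ a) :
    ∃ n, x ∈ shell U n := by
  obtain ⟨n, hn, hn'⟩ := Nat.exists_not_and_succ_of_not_zero_of_exists (p := (x ∉ U ·))
    (not_not.2 hx₀) (hU.exists_notMem x hx)
  exact ⟨n, subset_closure (not_not.1 hn), hn'⟩

end IsShrinkingNhds

theorem exists_isOpen_closure_subset_diff_nonempty [T1Space X] [RegularSpace X] {a : X}
    (ha : (𝓝[≠] a).NeBot) {N : Set X} (hN : N ∈ 𝓝 a) :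
    ∃ O, IsOpen O ∧ a ∈ O ∧ closure O ⊆ N ∧ (N \ O).Nonempty := by
  obtain ⟨p, hpa, hpN⟩ := ha.nonempty_of_mem (inter_mem_nhdsWithin {a}ᶜ hN)
  obtain ⟨O, ⟨haO, hO⟩, hON⟩ := (hasBasis_opens_closure a).mem_iff.1
    (inter_mem hN (isOpen_compl_singleton.mem_nhds (Ne.symm hpa)))
  exact ⟨O, hO, haO, hON.trans inter_subset_left,
    p, hpN, fun hpO => (hON (subset_closure hpO)).2 rfl⟩

theorem exists_isShrinkingNhds [T1Space X] [RegularSpace X] [FirstCountableTopology X] {a : X}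
    (ha : (𝓝[≠] a).NeBot) {W : Set X} (hW : W ∈ 𝓝 a) :
    ∃ U, IsShrinkingNhds a U ∧ (∀ n, (shell U n).Nonempty) ∧ closure (U 0) ⊆ W := by
  obtain ⟨B, hB⟩ := (𝓝 a).exists_antitone_basis
  have step (O : OpenNhdsOf a) (n : ℕ) : ∃ O' : OpenNhdsOf a,
      closure (O' : Set X) ⊆ O ∩ B n ∩ W ∧ ((O : Set X) \ O').Nonempty := by
    obtain ⟨O', hO', haO', hcl, hne⟩ := exists_isOpen_closure_subset_diff_nonempty ha
      (inter_mem (inter_mem (O.isOpen.mem_nhds O.mem) (hB.mem n)) hW)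
    exact ⟨⟨⟨O', hO'⟩, haO'⟩, hcl,
      hne.mono (sdiff_subset_sdiff_left (inter_subset_left.trans inter_subset_left))⟩
  choose F hFcl hFne using step
  let T : ℕ → OpenNhdsOf a := fun n => Nat.rec ⊤ (fun n O => F O n) n
  refine ⟨fun n => T (n + 1), ⟨fun n => (T (n + 1)).isOpen, fun n => (T (n + 1)).mem,
    fun n => (hFcl _ _).trans (inter_subset_left.trans inter_subset_left), fun x hx => ?_⟩,
    fun n => (hFne _ _).mono (sdiff_subset_sdiff_left subset_closure),
    (hFcl _ _).trans inter_subset_right⟩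
  obtain ⟨n, hn⟩ := hB.mem_iff.1 (isOpen_compl_singleton.mem_nhds hx.symm)
  exact ⟨n, fun hxT => hn ((hFcl _ _ (subset_closure hxT)).1.2) rfl⟩

def shellPairing (a b : X) (U V : ℕ → Set X) : Set (X × X) :=
  insert (a, b) (⋃ n, shell U n ×ˢ shell V n)

theorem preimage_swap_shellPairing (a b : X) (U V : ℕ → Set X) :
    Prod.swap ⁻¹' shellPairing a b U V = shellPairing b a V U := by
  ext ⟨x, y⟩
  simp only [shellPairing, mem_preimage, Prod.swap_prod_mk, mem_insert_iff, Prod.mk.injEq,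
    mem_iUnion, mem_prod]
  tauto

theorem compl_shellPairing_mem_nhds_of_ne {a b p q : X} {U V : ℕ → Set X}
    (hU : IsShrinkingNhds a U) (hV : ∀ n, IsOpen (V n)) (hpq : (p, q) ∉ shellPairing a b U V)
    (hp : p ≠ a) : (shellPairing a b U V)ᶜ ∈ 𝓝 (p, q) := by
  obtain ⟨m, hm⟩ := hU.exists_notMem_closure hp
  -- Away from `closure (U (m + 1))` only the first `m + 1` of the closed blocks are met.
  set T := ⋃ n ∈ Iic m, shell U n ×ˢ shell V n
  have hT : IsClosed T := (finite_Iic m).isClosed_biUnion fun n _ =>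
    (isClosed_shell hU.isOpen n).prod (isClosed_shell hV n)
  have hpT : (p, q) ∉ T := fun h => hpq <| mem_insert_of_mem _ <| by
    obtain ⟨n, -, hn⟩ := mem_iUnion₂.1 h
    exact mem_iUnion.2 ⟨n, hn⟩
  refine mem_of_superset (inter_mem
    ((isClosed_closure.isOpen_compl.prod isOpen_univ).mem_nhds ⟨hm, trivial⟩)
    (hT.isOpen_compl.mem_nhds hpT)) ?_
  rintro ⟨x, y⟩ ⟨⟨hx, -⟩, hxyT⟩ (hxy | hxy)
  · exact hx ((Prod.ext_iff.1 hxy).1 ▸ subset_closure (hU.mem (m + 1)))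
  · obtain ⟨n, hn⟩ := mem_iUnion.1 hxy
    rcases le_or_gt n m with hnm | hmn
    · exact hxyT (mem_biUnion (show n ∈ Iic m from hnm) hn)
    · exact hx (hU.shell_subset_closure hmn hn.1)

theorem isClosed_shellPairing {a b : X} {U V : ℕ → Set X} (hU : IsShrinkingNhds a U)
    (hV : IsShrinkingNhds b V) : IsClosed (shellPairing a b U V) := by
  refine isOpen_compl_iff.1 (isOpen_iff_mem_nhds.2 fun ⟨p, q⟩ hpq => ?_)
  by_cases hp : p = a
  · have hq : q ≠ b := by
      rintro rfl
      exact hpq (hp ▸ mem_insert _ _)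
    have hqp : (q, p) ∉ shellPairing b a V U := fun h =>
      hpq (by rwa [← preimage_swap_shellPairing b a V U])
    have := continuous_swap.tendsto (p, q)
      (compl_shellPairing_mem_nhds_of_ne hV hU.isOpen hqp hq)
    rwa [mem_map, preimage_compl, preimage_swap_shellPairing] at this
  · exact compl_shellPairing_mem_nhds_of_ne hU hV.isOpen hpq hp

def shellRelation (a b : X) (U V : ℕ → Set X) : Set (X × X) :=
  shellPairing a b U V ∪ Prod.swap ⁻¹' shellPairing a b U V ∪
    {p | p.1 = p.2 ∧ p.1 ∉ U 0 ∧ p.1 ∉ V 0}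

theorem shellRelation_comm (a b : X) (U V : ℕ → Set X) :
    shellRelation b a V U = shellRelation a b U V := by
  ext ⟨x, y⟩
  simp only [shellRelation, ← preimage_swap_shellPairing a b U V, preimage_preimage,
    Prod.swap_swap, preimage_id', mem_union, mem_preimage, mem_ofPred_eq]
  tauto

theorem preimage_swap_shellRelation (a b : X) (U V : ℕ → Set X) :
    Prod.swap ⁻¹' shellRelation a b U V = shellRelation a b U V := by
  ext ⟨x, y⟩
  simp only [shellRelation, preimage_union, preimage_preimage, Prod.swap_swap, preimage_id',
    mem_union, mem_preimage, Prod.fst_swap, Prod.snd_swap, mem_ofPred_eq]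
  constructor <;> rintro ((h | h) | ⟨rfl, h⟩) <;> simp_all

theorem isClosed_shellRelation [T2Space X] {a b : X} {U V : ℕ → Set X}
    (hU : IsShrinkingNhds a U) (hV : IsShrinkingNhds b V) : IsClosed (shellRelation a b U V) :=
  have hP := isClosed_shellPairing hU hV
  (hP.union (hP.preimage continuous_swap)).union
    ((isClosed_eq continuous_fst continuous_snd).inter
      (((hU.isOpen 0).isClosed_compl.preimage continuous_fst).inter
        ((hV.isOpen 0).isClosed_compl.preimage continuous_fst)))

theorem mk_mem_shellRelation_iff {a b y : X} {U V : ℕ → Set X} (hU : IsShrinkingNhds a U)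
    (hV : IsShrinkingNhds b V) (hUV : Disjoint (closure (U 0)) (closure (V 0))) :
    (a, y) ∈ shellRelation a b U V ↔ y = b := by
  have haV (n : ℕ) : a ∉ closure (V n) := fun h => hUV.notMem_of_mem_left
    (subset_closure (hU.mem 0)) (closure_mono (hV.antitone n.zero_le) h)
  refine ⟨?_, fun hy => Or.inl (Or.inl (hy ▸ mem_insert _ _))⟩
  rintro ((h | h) | ⟨-, h, -⟩)
  · rcases h with h | h
    · exact (Prod.ext_iff.1 h).2
    · obtain ⟨n, hn⟩ := mem_iUnion.1 h
      exact (hU.notMem_shell n hn.1).elim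
  · rcases h with h | h
    · have hab : a = b := (Prod.ext_iff.1 h).2
      exact (haV 0 (hab ▸ subset_closure (hV.mem 0))).elim
    · obtain ⟨n, -, hn⟩ := mem_iUnion.1 h
      exact (haV n hn.1).elim
  · exact (h (hU.mem 0)).elim

theorem exists_mk_mem_shellRelation_of_mem {a b x : X} {U V : ℕ → Set X}
    (hU : IsShrinkingNhds a U) (hV : ∀ n, (shell V n).Nonempty) (hx : x ∈ U 0) :
    ∃ y, (x, y) ∈ shellRelation a b U V := by
  rcases eq_or_ne x a with rfl | hxa
  · exact ⟨b, Or.inl (Or.inl (mem_insert _ _))⟩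
  obtain ⟨n, hn⟩ := hU.exists_mem_shell hx hxa
  obtain ⟨y, hy⟩ := hV n
  exact ⟨y, Or.inl (Or.inl (mem_insert_of_mem _ (mem_iUnion.2 ⟨n, hn, hy⟩)))⟩

theorem exists_mk_mem_shellRelation {a b : X} {U V : ℕ → Set X}
    (hU : IsShrinkingNhds a U) (hV : IsShrinkingNhds b V) (hU' : ∀ n, (shell U n).Nonempty)
    (hV' : ∀ n, (shell V n).Nonempty) (x : X) : ∃ y, (x, y) ∈ shellRelation a b U V := by
  by_cases hxU : x ∈ U 0
  · exact exists_mk_mem_shellRelation_of_mem hU hV' hxU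
  by_cases hxV : x ∈ V 0
  · rw [← shellRelation_comm]
    exact exists_mk_mem_shellRelation_of_mem hV hU' hxV
  exact ⟨x, Or.inr ⟨rfl, hxU, hxV⟩⟩

end Shells

/-- Every first countable, crowded, compact Hausdorff space is pin homogeneous. -/
theorem pin_homogeneous_of_firstCountable_crowded {X : Type u} [TopologicalSpace X]
    [CompactSpace X] [T2Space X] [FirstCountableTopology X]
    (hcrowded : ∀ x : X, ¬ IsOpen ({x} : Set X)) :
    ∀ a b : X, PinEquiv a b := by
  intro a b
  rcases eq_or_ne a b with rfl | hab
  · exact PinEquiv.refl a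
  have hnhds (x : X) : (𝓝[≠] x).NeBot :=
    ⟨mt (isOpen_singleton_iff_punctured_nhds x).2 (hcrowded x)⟩
  obtain ⟨Wa, Wb, hWa, hWb, haW, hbW, hW⟩ := t2_separation hab
  obtain ⟨U, hU, hU', hUW⟩ := exists_isShrinkingNhds (hnhds a) (hWa.mem_nhds haW)
  obtain ⟨V, hV, hV', hVW⟩ := exists_isShrinkingNhds (hnhds b) (hWb.mem_nhds hbW)
  have hUV : Disjoint (closure (U 0)) (closure (V 0)) := hW.mono hUW hVW
  refine pinEquiv_of_symmetric_relation (shellRelation a b U V) (isClosed_shellRelation hU hV)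
    (preimage_swap_shellRelation a b U V) (exists_mk_mem_shellRelation hU hV hU' hV')
    (fun _ => mk_mem_shellRelation_iff hU hV hUV) fun _ => ?_
  rw [← shellRelation_comm]
  exact mk_mem_shellRelation_iff hV hU hUV.symm
end

section
/- An arbitrary product of pin homogeneous compact Hausdorff spaces is pin homogeneous. -/
universe u

/-! Take the product of the coordinatewise witnesses: the fibre of `Pi.map f` over a point is the
box of the coordinate fibres, and `Pi.map g` maps such a box onto the box of the images. -/

open Set Function

theorem Set.preimage_piMap_singleton {ι : Type*} {α β : ι → Type*} (f : ∀ i, α i → β i)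
    (b : ∀ i, β i) : Pi.map f ⁻¹' {b} = univ.pi fun i => f i ⁻¹' {b i} := by
  rw [← univ_pi_singleton]; rfl

theorem PinEquiv.pi {I : Type v} {X : I → Type u} [∀ i, TopologicalSpace (X i)]
    {a b : ∀ i, X i} (h : ∀ i, PinEquiv (a i) (b i)) : PinEquiv a b := by
  choose Y _ _ _ f g hf hsurj hg using h
  refine ⟨∀ i, Y i, inferInstance, inferInstance, inferInstance, Pi.map f,
    Homeomorph.piCongrRight g, Continuous.piMap hf, Surjective.piMap hsurj, ?_⟩
  simp only [preimage_piMap_singleton, ← hg]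
  exact piMap_image_univ_pi _ _

theorem pin_homogeneous_pi_general {I : Type v} {X : I → Type u}
    [∀ i, TopologicalSpace (X i)]
    (h : ∀ i, ∀ a b : X i, PinEquiv a b) :
    ∀ a b : (i : I) → X i, PinEquiv a b :=
  fun _ _ => PinEquiv.pi fun i => h i _ _

/-- A product of pin homogeneous compact Hausdorff spaces is pin homogeneous. -/
theorem pin_homogeneous_pi {I : Type v} {X : I → Type u}
    [∀ i, TopologicalSpace (X i)] [∀ i, CompactSpace (X i)] [∀ i, T2Space (X i)]
    (h : ∀ i, ∀ a b : X i, PinEquiv a b) :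
    ∀ a b : (i : I) → X i, PinEquiv a b :=
  pin_homogeneous_pi_general h
end

section
/- In the closed interval [-2, 2], the points 0 and 2 are pin equivalent: the set Y = {(x,y) ∈ [-2,2]² : |x| + |y| = 2, x ≥ -1, y ≥ -1} ∪ [-2,-1]², with f(x,y) = x and g(x,y) = (y,x), gives a continuous surjection f : Y → [-2,2] and a homeomorphism g : Y → Y with g(f⁻¹{0}) = f⁻¹{2}. -/
/-!
The vertex `(0, -2)` of the diamond `|x| + |y| = 2` is cut off by `y ≥ -1`, and the square
`[-2,-1]²` lies over `x ≤ -1`, so the fibre of `Y` over `0` is the single point `(0, 2)` and,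
symmetrically, the fibre over `2` is `(2, 0)`; the swap exchanges them. Every `x ∈ [-2, 2]` has a
point of `Y` above it: `(x, 2 - |x|)` when `x ≥ -1`, and `(x, -1)` otherwise.
-/

open Set

def pinSpace : Set (ℝ × ℝ) :=
  {p | (|p.1| + |p.2| = 2 ∧ -1 ≤ p.1 ∧ -1 ≤ p.2) ∨
    (p.1 ∈ Icc (-2 : ℝ) (-1) ∧ p.2 ∈ Icc (-2 : ℝ) (-1))}

namespace pinSpace

theorem fst_mem_Icc {p : ℝ × ℝ} (hp : p ∈ pinSpace) : p.1 ∈ Icc (-2 : ℝ) 2 := by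
  rcases hp with ⟨hsum, -, -⟩ | ⟨⟨hlo, hhi⟩, -⟩
  · exact abs_le.mp (by linarith [abs_nonneg p.2])
  · exact ⟨hlo, by linarith⟩

theorem swap_mem {p : ℝ × ℝ} (hp : p ∈ pinSpace) : p.swap ∈ pinSpace := by
  rcases hp with ⟨hsum, h1, h2⟩ | ⟨h1, h2⟩
  · exact Or.inl ⟨by rw [Prod.fst_swap, Prod.snd_swap, add_comm, hsum], h2, h1⟩
  · exact Or.inr ⟨h2, h1⟩

theorem exists_mk_mem {x : ℝ} (hx : x ∈ Icc (-2 : ℝ) 2) : ∃ y, (x, y) ∈ pinSpace := by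
  by_cases h : -1 ≤ x
  · have hx' : |x| ≤ 2 := abs_le.mpr hx
    refine ⟨2 - |x|, Or.inl ⟨?_, h, by linarith⟩⟩
    rw [abs_of_nonneg (sub_nonneg.mpr hx')]
    ring
  · exact ⟨-1, Or.inr ⟨⟨hx.1, by linarith⟩, by norm_num⟩⟩

theorem mk_zero_mem_iff {y : ℝ} : ((0, y) : ℝ × ℝ) ∈ pinSpace ↔ y = 2 := by
  constructor
  · rintro (⟨hsum, -, hy⟩ | ⟨⟨-, h⟩, -⟩)
    · rw [abs_zero, zero_add] at hsum
      rcases abs_choice y with h | h <;> [linarith; (simp only at hy; linarith)]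
    · norm_num at h
  · rintro rfl
    exact Or.inl ⟨by norm_num, by norm_num, by norm_num⟩

theorem mk_two_mem_iff {y : ℝ} : ((2, y) : ℝ × ℝ) ∈ pinSpace ↔ y = 0 := by
  constructor
  · rintro (⟨hsum, -, -⟩ | ⟨⟨-, h⟩, -⟩)
    · rw [abs_two] at hsum
      exact abs_eq_zero.mp (by linarith)
    · norm_num at h
  · rintro rfl
    exact Or.inl ⟨by norm_num, by norm_num, by norm_num⟩

end pinSpace

open Set in
/-- In `[-2, 2]`, the points `0` and `2` are pin equivalent, witnessed by the subspace
`Y = {(x,y) : |x| + |y| = 2, x ≥ -1, y ≥ -1} ∪ [-2,-1]²` of the plane, the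
first-coordinate projection `f`, and the coordinate swap `g`: `f` is a continuous
surjection onto `[-2,2]`, `g` is a continuous involution of `Y`, and
`g '' (f ⁻¹' {0}) = f ⁻¹' {2}`. -/
theorem pin_example_interval :
    ∃ (f : {p : ℝ × ℝ // (|p.1| + |p.2| = 2 ∧ -1 ≤ p.1 ∧ -1 ≤ p.2) ∨
              (p.1 ∈ Icc (-2 : ℝ) (-1) ∧ p.2 ∈ Icc (-2 : ℝ) (-1))} → Icc (-2 : ℝ) 2)
      (g : {p : ℝ × ℝ // (|p.1| + |p.2| = 2 ∧ -1 ≤ p.1 ∧ -1 ≤ p.2) ∨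
              (p.1 ∈ Icc (-2 : ℝ) (-1) ∧ p.2 ∈ Icc (-2 : ℝ) (-1))} →
            {p : ℝ × ℝ // (|p.1| + |p.2| = 2 ∧ -1 ≤ p.1 ∧ -1 ≤ p.2) ∨
              (p.1 ∈ Icc (-2 : ℝ) (-1) ∧ p.2 ∈ Icc (-2 : ℝ) (-1))}),
      (∀ p, (f p : ℝ) = (p : ℝ × ℝ).1) ∧
      (∀ p, ((g p : ℝ × ℝ)) = Prod.swap (p : ℝ × ℝ)) ∧
      Continuous f ∧ Function.Surjective f ∧
      Continuous g ∧ (∀ p, g (g p) = p) ∧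
      g '' (f ⁻¹' {⟨(0 : ℝ), by norm_num⟩}) = f ⁻¹' {⟨(2 : ℝ), by norm_num⟩} := by
  refine ⟨fun p => ⟨p.1.1, pinSpace.fst_mem_Icc p.2⟩, fun p => ⟨p.1.swap, pinSpace.swap_mem p.2⟩,
    fun _ => rfl, fun _ => rfl, by fun_prop, ?_, by fun_prop, fun _ => rfl, ?_⟩
  · rintro ⟨x, hx⟩
    obtain ⟨y, hy⟩ := pinSpace.exists_mk_mem hx
    exact ⟨⟨(x, y), hy⟩, rfl⟩
  · ext ⟨⟨x, y⟩, hxy⟩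
    simp only [mem_image, mem_preimage, mem_singleton_iff, Subtype.ext_iff, Subtype.exists,
      Prod.exists, Prod.swap_prod_mk, Prod.mk.injEq]
    constructor
    · rintro ⟨_, y', hp, rfl, rfl, rfl⟩
      exact pinSpace.mk_zero_mem_iff.mp hp
    · rintro rfl
      exact ⟨0, 2, pinSpace.mk_zero_mem_iff.mpr rfl, rfl, rfl, (pinSpace.mk_two_mem_iff.mp hxy).symm⟩
end
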